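/- Let ι : G ↪ C be a dense full subcategory and U : D → C any functor. Then the domain functor dom : Comma(ι, U) → C is such that dom : Comma(1_C, U) → C is the pointwise left Kan extension of dom ∘ j along j, where j : Comma(ι, U) → Comma(1_C, U) is the induced inclusion. Equivalently, for every object (X, p : X → U(Y), Y) of Comma(1_C, U), the object X is the colimit of the domains of all morphisms in Comma(ι, U) mapping into (X, p, Y). -/

import Mathlib

open CategoryTheory Limits

universe v u₁ u₂

variable {C : Type u₁} [Category.{v} C]

/-- The canonical cocone on the diagram of all morphisms from objects of the subcategory
(along `ι`) into `X`, with apex `X`. -/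
@[simps]
def canonicalCocone {G : Type u₁} [Category.{v} G] (ι : G ⥤ C) (X : C) :
    Cocone (CostructuredArrow.proj ι X ⋙ ι) where
  pt := X
  ι := { app := fun g => g.hom, naturality := fun _ _ f => (CostructuredArrow.w f).trans (Category.comp_id _).symm }

/-- `ι` is dense if every object of `C` is the colimit of the canonical diagram of
morphisms from objects of the subcategory into it. -/
def IsDense {G : Type u₁} [Category.{v} G] (ι : G ⥤ C) : Prop :=
  ∀ X : C, Nonempty (IsColimit (canonicalCocone ι X))

/-- The inclusion `Comma ι U ⥤ Comma (𝟭 C) U` induced by `ι : G ⥤ C`. -/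
@[simps]
def commaIncl {G : Type u₁} [Category.{v} G] {D : Type u₂} [Category.{v} D]
    (ι : G ⥤ C) (U : D ⥤ C) : Comma ι U ⥤ Comma (𝟭 C) U where
  obj p := { left := ι.obj p.left, right := p.right, hom := p.hom }
  map φ := { left := ι.map φ.left, right := φ.right, w := by simp [φ.w] }


/-!
At `x = (X, p, Y)` the Kan extension condition asks that `X` be the colimit of the objects `ι A`
indexed by the arrows `j (A, q, Y') ⟶ x`. Forgetting the `D`-part of such an arrow is a functor
to the canonical diagram of `ι` over `X`; it is left adjoint to its section `f ↦ (A, f ≫ p, Y)`.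
Being a right adjoint, the section is final, hence so is the forgetful functor, and the colimit
over the canonical diagram, which is `X` by density, is also the colimit over the arrows into `x`.
-/

namespace commaIncl

variable {G : Type u₁} [Category.{v} G] {D : Type u₂} [Category.{v} D]
  (ι : G ⥤ C) (U : D ⥤ C) (x : Comma (𝟭 C) U)

def costructuredArrowLeft : CostructuredArrow (commaIncl ι U) x ⥤ CostructuredArrow ι x.left where
  obj c := CostructuredArrow.mk (Y := c.left.left) c.hom.left
  map φ := CostructuredArrow.homMk φ.left.left (congrArg CommaMorphism.left (CostructuredArrow.w φ))

def costructuredArrowOfLeft : CostructuredArrow ι x.left ⥤ CostructuredArrow (commaIncl ι U) x where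
  obj f := CostructuredArrow.mk (S := commaIncl ι U)
    (Y := { left := f.left, right := x.right, hom := f.hom ≫ x.hom : Comma ι U })
    ⟨f.hom, 𝟙 x.right, by simp [commaIncl]⟩
  map φ := CostructuredArrow.homMk ⟨φ.left, 𝟙 x.right, by simp [commaIncl]⟩
    (by ext <;> simp [commaIncl])

theorem costructuredArrowOfLeft_comp_costructuredArrowLeft :
    costructuredArrowOfLeft ι U x ⋙ costructuredArrowLeft ι U x = 𝟭 _ :=
  rfl

def costructuredArrowAdjunction : costructuredArrowLeft ι U x ⊣ costructuredArrowOfLeft ι U x :=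
  Adjunction.mkOfHomEquiv
    { homEquiv c f :=
        { toFun α := CostructuredArrow.homMk
            ⟨α.left, c.hom.right, (CostructuredArrow.w_assoc α x.hom).trans c.hom.w⟩
            (by ext; exacts [CostructuredArrow.w α, Category.comp_id _])
          invFun β := CostructuredArrow.homMk β.left.left
            (congrArg CommaMorphism.left (CostructuredArrow.w β))
          left_inv _ := rfl
          right_inv β := by
            ext
            · rfl
            · exact (congrArg CommaMorphism.right (CostructuredArrow.w β)).symm.trans
                (Category.comp_id _) }
      homEquiv_naturality_left_symm _ _ := rfl
      homEquiv_naturality_right _ _ := by ext; exacts [rfl, (Category.comp_id _).symm] }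

instance final_costructuredArrowLeft : (costructuredArrowLeft ι U x).Final := by
  have := Functor.final_of_adjunction (costructuredArrowAdjunction ι U x)
  have : (costructuredArrowOfLeft ι U x ⋙ costructuredArrowLeft ι U x).Final := by
    rw [costructuredArrowOfLeft_comp_costructuredArrowLeft]
    infer_instance
  exact Functor.final_of_final_comp (costructuredArrowOfLeft ι U x) _

end commaIncl

theorem dom_pointwiseLeftKanExtension_along_commaIncl_general
    {G : Type u₁} [Category.{v} G] {D : Type u₂} [Category.{v} D]
    (ι : G ⥤ C) (hdense : IsDense ι) (U : D ⥤ C) :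
    Nonempty ((Functor.LeftExtension.mk (Comma.fst (𝟭 C) U)
      (𝟙 (commaIncl ι U ⋙ Comma.fst (𝟭 C) U))).IsPointwiseLeftKanExtension) := by
  refine ⟨fun x => ?_⟩
  have hwhisker := (Functor.Final.isColimitWhiskerEquiv (commaIncl.costructuredArrowLeft ι U x)
    (canonicalCocone ι x.left)).symm (hdense x.left).some
  exact hwhisker.ofIsoColimit
    (Cocone.ext (Iso.refl _) fun _ => (Category.comp_id _).trans (Category.id_comp _).symm)

/-- If `ι : G ⥤ C` is a dense full subcategory inclusion and `U : D ⥤ C` is any functor,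
then the domain functor `dom : Comma (𝟭 C) U ⥤ C` is the pointwise left Kan extension of
`dom ∘ j` along the induced inclusion `j : Comma ι U ⥤ Comma (𝟭 C) U` (with identity
unit). -/
theorem dom_pointwiseLeftKanExtension_along_commaIncl
    {G : Type u₁} [Category.{v} G] {D : Type u₂} [Category.{v} D]
    (ι : G ⥤ C) [ι.Full] [ι.Faithful] (hdense : IsDense ι) (U : D ⥤ C) :
    Nonempty ((Functor.LeftExtension.mk (Comma.fst (𝟭 C) U)
      (𝟙 (commaIncl ι U ⋙ Comma.fst (𝟭 C) U))).IsPointwiseLeftKanExtension) :=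
  dom_pointwiseLeftKanExtension_along_commaIncl_general ι hdense U
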